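/- There exists a unique λ* ∈ (π²/16, π²/4) solving 1 + (2λ − 1)cos(√(4λ)) = 0, and moreover λ* < 9π²/64. Consequently, for every λ ∈ (π²/16, λ*] there exists k > 0 with (cos(√(4λ)) − 1 + 2λ)/sin(√(4λ)) ≤ k ≤ −tan(√(4λ)). -/

import Mathlib

open Real Set

noncomputable def fAux (t : ℝ) : ℝ := 1 + (t ^ 2 / 2 - 1) * Real.cos t

lemma fAux_hasDeriv (t : ℝ) :
    HasDerivAt fAux (t * Real.cos t - (t ^ 2 / 2 - 1) * Real.sin t) t := by
  have h : HasDerivAt (fun t : ℝ => 1 + (t ^ 2 / 2 - 1) * Real.cos t)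
      (0 + ((↑2 * t ^ 1 / 2 - 0) * Real.cos t + (t ^ 2 / 2 - 1) * (-Real.sin t))) t :=
    (hasDerivAt_const t 1).add
      ((((hasDerivAt_pow 2 t).div_const 2).sub (hasDerivAt_const t 1)).mul (Real.hasDerivAt_cos t))
  show HasDerivAt (fun t : ℝ => 1 + (t ^ 2 / 2 - 1) * Real.cos t) _ t
  convert h using 1
  push_cast
  ring

lemma fAux_anti : StrictAntiOn fAux (Icc (π / 2) π) := by
  apply strictAntiOn_of_deriv_neg (convex_Icc _ _)
  · exact Continuous.continuousOn (by unfold fAux; continuity)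
  · intro x hx
    rw [interior_Icc] at hx
    rw [(fAux_hasDeriv x).deriv]
    have hc : Real.cos x < 0 := Real.cos_neg_of_pi_div_two_lt_of_lt hx.1 (by linarith [Real.pi_pos, hx.2])
    have hs : 0 < Real.sin x := Real.sin_pos_of_pos_of_lt_pi (by linarith [Real.pi_pos, hx.1]) hx.2
    have hx0 : (0:ℝ) < x := by linarith [Real.pi_pos, hx.1]
    have hsq : 2 < x ^ 2 := by nlinarith [Real.pi_gt_three, hx.1]
    nlinarith

lemma fAux_zero : ∃ t ∈ Ioo (π / 2) π, fAux t = 0 := by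
  have hle : π / 2 ≤ π := by linarith [Real.pi_pos]
  have hcont : ContinuousOn fAux (Icc (π / 2) π) :=
    Continuous.continuousOn (by unfold fAux; continuity)
  have h1 : fAux (π / 2) = 1 := by simp [fAux, Real.cos_pi_div_two]
  have h2 : fAux π < 0 := by
    simp only [fAux, Real.cos_pi]
    nlinarith [Real.pi_gt_three]
  have h0 : (0 : ℝ) ∈ Ioo (fAux π) (fAux (π / 2)) := by
    rw [h1]; exact ⟨h2, one_pos⟩
  obtain ⟨t, ht, hft⟩ := intermediate_value_Ioo' hle hcont h0
  exact ⟨t, ht, hft⟩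

lemma fAux_lt_three_pi_div_four : fAux (3 * π / 4) < 0 := by
  have h34 : 3 * π / 4 = π - π / 4 := by ring
  have hcos : Real.cos (3 * π / 4) = -(Real.sqrt 2 / 2) := by
    rw [h34, Real.cos_pi_sub, Real.cos_pi_div_four]
  have hsqrt : (1.4 : ℝ) < Real.sqrt 2 := by
    have := Real.sq_sqrt (by norm_num : (2:ℝ) ≥ 0)
    nlinarith [Real.sqrt_nonneg 2]
  have hpi : (3.141592 : ℝ) < π := Real.pi_gt_d6
  have h : (1.77 : ℝ) < 9 * π ^ 2 / 32 - 1 := by nlinarith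
  simp only [fAux, hcos]
  nlinarith [mul_lt_mul hsqrt h.le (by norm_num : (0:ℝ) < 1.77) (Real.sqrt_nonneg 2)]

theorem lambda_star_exists_unique :
    ∃ l : ℝ,
      (l ∈ Ioo (π ^ 2 / 16) (π ^ 2 / 4)
        ∧ 1 + (2 * l - 1) * Real.cos (Real.sqrt (4 * l)) = 0)
      ∧ (∀ l' : ℝ,
          l' ∈ Ioo (π ^ 2 / 16) (π ^ 2 / 4)
            ∧ 1 + (2 * l' - 1) * Real.cos (Real.sqrt (4 * l')) = 0 → l' = l)
      ∧ l < 9 * π ^ 2 / 64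
      ∧ ∀ lam ∈ Ioc (π ^ 2 / 16) l, ∃ k > (0 : ℝ),
          (Real.cos (Real.sqrt (4 * lam)) - 1 + 2 * lam) / Real.sin (Real.sqrt (4 * lam)) ≤ k
          ∧ k ≤ -Real.tan (Real.sqrt (4 * lam)) := by
  obtain ⟨t, ht, hft⟩ := fAux_zero
  have hpi : (0:ℝ) < π := Real.pi_pos
  have ht0 : 0 < t := lt_trans (by linarith) ht.1
  have htmem : t ∈ Icc (π / 2) π := ⟨ht.1.le, ht.2.le⟩
  -- t < 3π/4
  have ht34 : t < 3 * π / 4 := by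
    by_contra h
    push_neg at h
    have hmem34 : (3 * π / 4) ∈ Icc (π / 2) π := ⟨by linarith, by linarith⟩
    rcases eq_or_lt_of_le h with heq | hlt
    · rw [← heq] at hft
      exact absurd hft (ne_of_lt fAux_lt_three_pi_div_four)
    · have := fAux_anti hmem34 htmem hlt
      rw [hft] at this
      linarith [fAux_lt_three_pi_div_four]
  refine ⟨t ^ 2 / 4, ⟨⟨?_, ?_⟩, ?_⟩, ?_, ?_, ?_⟩
  · nlinarith [ht.1]
  · nlinarith [ht.2]
  · have h4 : 4 * (t ^ 2 / 4) = t ^ 2 := by ring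
    rw [h4, Real.sqrt_sq ht0.le]
    have : 2 * (t ^ 2 / 4) - 1 = t ^ 2 / 2 - 1 := by ring
    rw [this]
    exact hft
  · -- uniqueness
    rintro l' ⟨⟨hl1, hl2⟩, hgl⟩
    set t' := Real.sqrt (4 * l') with ht'def
    have hl0 : 0 < l' := by nlinarith
    have ht'sq : t' ^ 2 = 4 * l' := Real.sq_sqrt (by linarith)
    have ht'1 : π / 2 < t' := by
      rw [ht'def]
      rw [show π / 2 = Real.sqrt ((π/2)^2) from (Real.sqrt_sq (by linarith)).symm]
      apply Real.sqrt_lt_sqrt (by positivity)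
      nlinarith
    have ht'2 : t' < π := by
      rw [ht'def]
      rw [show π = Real.sqrt (π^2) from (Real.sqrt_sq hpi.le).symm]
      apply Real.sqrt_lt_sqrt (by linarith)
      nlinarith
    have hft' : fAux t' = 0 := by
      unfold fAux
      rw [ht'sq]
      calc 1 + (4 * l' / 2 - 1) * Real.cos t' = 1 + (2 * l' - 1) * Real.cos (Real.sqrt (4 * l')) := by
            rw [← ht'def]; ring_nf
        _ = 0 := hgl
    have : t' = t := by
      apply fAux_anti.injOn ⟨ht'1.le, ht'2.le⟩ htmem
      rw [hft', hft]
    rw [← this] at *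
    nlinarith
  · nlinarith
  · -- the k part
    intro lam hlam
    have hlam0 : 0 < lam := by nlinarith [hlam.1]
    set s := Real.sqrt (4 * lam) with hsdef
    have hssq : s ^ 2 = 4 * lam := Real.sq_sqrt (by linarith)
    have hs1 : π / 2 < s := by
      rw [hsdef, show π / 2 = Real.sqrt ((π/2)^2) from (Real.sqrt_sq (by linarith)).symm]
      apply Real.sqrt_lt_sqrt (by positivity)
      nlinarith [hlam.1]
    have hs2 : s ≤ t := by
      rw [hsdef, show t = Real.sqrt (t^2) from (Real.sqrt_sq ht0.le).symm]
      apply Real.sqrt_le_sqrt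
      nlinarith [hlam.2]
    have hsmem : s ∈ Icc (π / 2) π := ⟨hs1.le, by linarith⟩
    have hspi : s < π := by linarith
    have hsin : 0 < Real.sin s := Real.sin_pos_of_pos_of_lt_pi (by linarith) hspi
    have hcos : Real.cos s < 0 := Real.cos_neg_of_pi_div_two_lt_of_lt hs1 (by linarith)
    have hfge : 0 ≤ fAux s := by
      rcases eq_or_lt_of_le hs2 with heq | hlt
      · rw [heq, hft]
      · have := fAux_anti hsmem htmem hlt
        rw [hft] at this
        linarith
    have hfge' : 0 ≤ 1 + (2 * lam - 1) * Real.cos s := by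
      have : 2 * lam - 1 = s ^ 2 / 2 - 1 := by rw [hssq]; ring
      rw [this]; exact hfge
    have htan : Real.tan s < 0 := by
      rw [Real.tan_eq_sin_div_cos]
      exact div_neg_of_pos_of_neg hsin hcos
    refine ⟨-Real.tan s, by linarith, ?_, le_refl _⟩
    rw [div_le_iff₀ hsin, Real.tan_eq_sin_div_cos]
    have hpyth := Real.sin_sq_add_cos_sq s
    have hkey : -(Real.sin s / Real.cos s) * Real.sin s = Real.sin s ^ 2 / (-Real.cos s) := by
      rw [div_neg]
      ring
    rw [hkey, le_div_iff₀ (by linarith : (0:ℝ) < -Real.cos s)]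
    nlinarith
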